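/- arXiv:1809.03744 — 2 statements merged into one kernel-verified Lean document; each statement's English description precedes it below -/
import Mathlib

section
/- Assume there exists Z ∈ ℤ^V with Z > 0 and χ(Z) = μ, where μ = min_{l ∈ ℤ^V} χ(l) (the non-rational case). Then the set M = {Z ∈ ℤ^V : Z > 0 and χ(Z) = μ} has a greatest element: there exists Z_max ∈ M such that Z ≤ Z_max for every Z ∈ M. -/
/-!
For `m = x ⊓ y` the quadratic function `χ` satisfies
`χ(x ⊔ y) + χ(x ⊓ y) = χ(x) + χ(y) - B(x - m, y - m)`, and `B(x - m, y - m) ≥ 0` because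
`x - m` and `y - m` are nonnegative with disjoint supports while `B` is nonnegative off the
diagonal. Hence the integral minimizers of `χ` are closed under `⊔`. Minimality against
`Z ± e_v` bounds every `B(Z, e_v)`, which bounds `Z` since `B` is nondegenerate; so there are
finitely many minimizers, and the supremum of those in `M` is the greatest element of `M`.
-/

/-- Cast an integer-valued lattice point into the rational vector space `V → ℚ`. -/
def toQ {V : Type*} (l : V → ℤ) : V → ℚ := fun v => (l v : ℚ)

open Finset
open LinearMap (BilinForm)

theorem SupClosed.exists_isGreatest {α : Type*} [SemilatticeSup α] {s : Set α}
    (hs : SupClosed s) (hfin : s.Finite) (hne : s.Nonempty) : ∃ a, IsGreatest s a := by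
  obtain ⟨a, ha⟩ := hfin.exists_maximal hne
  exact ⟨a, ha.prop, fun b hb => le_sup_right.trans (ha.2 (hs ha.prop hb) le_sup_left)⟩

theorem toQ_sup {V : Type*} (X Y : V → ℤ) : toQ (X ⊔ Y) = toQ X ⊔ toQ Y :=
  funext fun _ => Int.cast_max

theorem toQ_inf {V : Type*} (X Y : V → ℤ) : toQ (X ⊓ Y) = toQ X ⊓ toQ Y :=
  funext fun _ => Int.cast_min

theorem toQ_add_single {V : Type*} [DecidableEq V] (Z : V → ℤ) (w : V) :
    toQ (Z + Pi.single w 1) = toQ Z + Pi.single w 1 := by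
  funext v
  by_cases h : v = w <;> simp [toQ, h]

theorem toQ_sub_single {V : Type*} [DecidableEq V] (Z : V → ℤ) (w : V) :
    toQ (Z - Pi.single w 1) = toQ Z - Pi.single w 1 := by
  funext v
  by_cases h : v = w <;> simp [toQ, h]

namespace LinearMap.BilinForm

theorem apply_nonneg_of_mul_eq_zero {V R : Type*} [Fintype V] [DecidableEq V] [CommRing R]
    [PartialOrder R] [IsOrderedRing R] (B : BilinForm R (V → R))
    (hoff : ∀ v w, v ≠ w → 0 ≤ B (Pi.single v 1) (Pi.single w 1))
    {a b : V → R} (ha : 0 ≤ a) (hb : 0 ≤ b) (hab : ∀ v, a v * b v = 0) : 0 ≤ B a b := by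
  rw [← Matrix.toBilin'_toMatrix' B, Matrix.toBilin'_apply]
  refine sum_nonneg fun v _ => sum_nonneg fun w _ => ?_
  rw [toMatrix'_apply]
  obtain rfl | hvw := eq_or_ne v w
  · rw [mul_right_comm, hab, zero_mul]
  · exact mul_nonneg (mul_nonneg (ha v) (hoff v w hvw)) (hb w)

theorem apply_sub_inf_nonneg {V R : Type*} [Fintype V] [DecidableEq V] [CommRing R]
    [LinearOrder R] [IsOrderedRing R] (B : BilinForm R (V → R))
    (hoff : ∀ v w, v ≠ w → 0 ≤ B (Pi.single v 1) (Pi.single w 1)) (x y : V → R) :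
    0 ≤ B (x - x ⊓ y) (y - x ⊓ y) := by
  refine B.apply_nonneg_of_mul_eq_zero hoff (sub_nonneg.2 inf_le_left) (sub_nonneg.2 inf_le_right)
    fun v => ?_
  rcases le_total (x v) (y v) with h | h <;> simp [h]

theorem nondegenerate_of_negDef {R M : Type*} [CommRing R] [PartialOrder R] [AddCommGroup M]
    [Module R M] (B : BilinForm R M) (hneg : ∀ x, x ≠ 0 → B x x < 0) : B.Nondegenerate :=
  ⟨fun x hx => by_contra fun h => (hneg x h).ne (hx x),
    fun y hy => by_contra fun h => (hneg y h).ne (hy y)⟩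

variable {V K : Type*} [Field K] [LinearOrder K] [IsStrictOrderedRing K]

theorem exists_abs_apply_le_of_abs_apply_single_le [Fintype V] [DecidableEq V]
    (B : BilinForm K (V → K)) (hB : B.Nondegenerate) (C : V → K) :
    ∃ N : V → K, ∀ z : V → K, (∀ w, |B z (Pi.single w 1)| ≤ C w) → ∀ v, |z v| ≤ N v := by
  set d := B.dualBasis hB (Pi.basisFun K V)
  refine ⟨fun v => ∑ w, C w * |d w v|, fun z hz v => ?_⟩
  have hzv : z v = ∑ w, B z (Pi.single w 1) * d w v := by
    conv_lhs => rw [← d.sum_repr z]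
    simp [d]
  rw [hzv]
  refine (abs_sum_le_sum_abs _ _).trans (sum_le_sum fun w _ => ?_)
  rw [abs_mul]
  exact mul_le_mul_of_nonneg_right (hz w) (abs_nonneg _)

def chi (B : BilinForm K (V → K)) (ZK x : V → K) : K := -(B x (x - ZK)) / 2

variable {B : BilinForm K (V → K)}

theorem chi_sup_add_chi_inf (hB : ∀ x y, B x y = B y x) (ZK x y : V → K) :
    B.chi ZK (x ⊔ y) + B.chi ZK (x ⊓ y) = B.chi ZK x + B.chi ZK y - B (x - x ⊓ y) (y - x ⊓ y) := by
  have hsup : x ⊔ y = x + y - x ⊓ y := by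
    funext v
    simp only [Pi.sup_apply, Pi.inf_apply, Pi.add_apply, Pi.sub_apply]
    linarith [min_add_max (x v) (y v)]
  rw [hsup]
  simp only [chi, map_add, map_sub, LinearMap.add_apply, LinearMap.sub_apply]
  linarith [hB x y, hB x (x ⊓ y), hB y (x ⊓ y)]

theorem abs_apply_le_of_chi_le (hB : ∀ x y, B x y = B y x) (ZK : V → K) {x u : V → K}
    (hadd : B.chi ZK x ≤ B.chi ZK (x + u)) (hsub : B.chi ZK x ≤ B.chi ZK (x - u)) :
    |B x u| ≤ (|B u ZK| - B u u) / 2 := by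
  simp only [chi, map_add, map_sub, LinearMap.add_apply, LinearMap.sub_apply] at hadd hsub
  rw [abs_le]
  constructor <;> linarith [hB x u, le_abs_self (B u ZK), neg_abs_le (B u ZK)]

end LinearMap.BilinForm

section Minimizers

variable {V : Type*} [Fintype V] [DecidableEq V] {B : BilinForm ℚ (V → ℚ)} {ZK : V → ℚ} {μ : ℚ}

theorem supClosed_positive_minimizers (hB : ∀ x y, B x y = B y x)
    (hoff : ∀ v w, v ≠ w → 0 ≤ B (Pi.single v 1) (Pi.single w 1))
    (hμ : ∀ l : V → ℤ, μ ≤ B.chi ZK (toQ l)) :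
    SupClosed {Z : V → ℤ | 0 ≤ Z ∧ Z ≠ 0 ∧ B.chi ZK (toQ Z) = μ} := by
  rintro X ⟨hX0, hXne, hX⟩ Y ⟨-, -, hY⟩
  refine ⟨hX0.trans le_sup_left, fun h => hXne (le_antisymm (le_sup_left.trans h.le) hX0), ?_⟩
  have hsup := hμ (X ⊔ Y)
  have hinf := hμ (X ⊓ Y)
  rw [toQ_sup] at hsup ⊢
  rw [toQ_inf] at hinf
  linarith [B.chi_sup_add_chi_inf hB ZK (toQ X) (toQ Y),
    B.apply_sub_inf_nonneg hoff (toQ X) (toQ Y)]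

theorem finite_minimizers (hB : ∀ x y, B x y = B y x) (hneg : ∀ x, x ≠ 0 → B x x < 0)
    (hμ : ∀ l : V → ℤ, μ ≤ B.chi ZK (toQ l)) :
    {Z : V → ℤ | B.chi ZK (toQ Z) = μ}.Finite := by
  obtain ⟨N, hN⟩ := B.exists_abs_apply_le_of_abs_apply_single_le (B.nondegenerate_of_negDef hneg)
    fun w => (|B (Pi.single w 1) ZK| - B (Pi.single w 1) (Pi.single w 1)) / 2
  refine (Set.Finite.pi (t := fun v => Set.Icc (-⌈N v⌉) ⌈N v⌉) fun v => Set.finite_Icc _ _).subset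
    fun Z (hZ : _ = μ) => Set.mem_univ_pi.2 fun v => ?_
  have hbound : ∀ w, |B (toQ Z) (Pi.single w 1)| ≤ _ := fun w => by
    refine B.abs_apply_le_of_chi_le hB ZK ?_ ?_
    · rw [hZ, ← toQ_add_single]; exact hμ _
    · rw [hZ, ← toQ_sub_single]; exact hμ _
  have hZv : |(Z v : ℚ)| ≤ ⌈N v⌉ := (hN _ hbound v).trans (Int.le_ceil _)
  exact abs_le.1 (by exact_mod_cast hZv)

end Minimizers

theorem chi_minimizers_greatest_element_general
    {V : Type*} [Fintype V] [DecidableEq V]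
    (B : LinearMap.BilinForm ℚ (V → ℚ))
    (hsymm : ∀ x y : V → ℚ, B x y = B y x)
    (hoff : ∀ v w : V, v ≠ w → 0 ≤ B (Pi.single v 1) (Pi.single w 1))
    (hneg : ∀ x : V → ℚ, x ≠ 0 → B x x < 0)
    (ZK : V → ℚ)
    (χ : (V → ℚ) → ℚ)
    (hχ : ∀ x : V → ℚ, χ x = -(B x (x - ZK)) / 2)
    (μ : ℚ)
    (hμ : IsLeast {c : ℚ | ∃ l : V → ℤ, χ (toQ l) = c} μ)
    (hex : ∃ Z : V → ℤ, 0 ≤ Z ∧ Z ≠ 0 ∧ χ (toQ Z) = μ) :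
    ∃ Zmax : V → ℤ, (0 ≤ Zmax ∧ Zmax ≠ 0 ∧ χ (toQ Zmax) = μ) ∧
      ∀ Z : V → ℤ, (0 ≤ Z ∧ Z ≠ 0 ∧ χ (toQ Z) = μ) → Z ≤ Zmax := by
  obtain rfl : χ = B.chi ZK := funext hχ
  have hlower : ∀ l : V → ℤ, μ ≤ B.chi ZK (toQ l) := fun l => hμ.2 ⟨l, rfl⟩
  have hfinite : {Z : V → ℤ | 0 ≤ Z ∧ Z ≠ 0 ∧ B.chi ZK (toQ Z) = μ}.Finite :=
    (finite_minimizers hsymm hneg hlower).subset fun _ hZ => hZ.2.2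
  exact (supClosed_positive_minimizers hsymm hoff hlower).exists_isGreatest hfinite hex

/-- Assume there exists `Z ∈ ℤ^V` with `Z > 0` and `χ(Z) = μ`, where
`μ = min_{l ∈ ℤ^V} χ(l)` (the non-rational case).  Then the set
`M = {Z ∈ ℤ^V : Z > 0, χ(Z) = μ}` has a greatest element. -/
theorem chi_minimizers_greatest_element
    {V : Type*} [Fintype V] [Nonempty V] [DecidableEq V]
    (B : LinearMap.BilinForm ℚ (V → ℚ))
    (hsymm : ∀ x y : V → ℚ, B x y = B y x)
    (hoff : ∀ v w : V, v ≠ w → 0 ≤ B (Pi.single v 1) (Pi.single w 1))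
    (hneg : ∀ x : V → ℚ, x ≠ 0 → B x x < 0)
    (ZK : V → ℚ)
    (hZK : ∀ v : V, B ZK (Pi.single v 1) = B (Pi.single v 1) (Pi.single v 1) + 2)
    (χ : (V → ℚ) → ℚ)
    (hχ : ∀ x : V → ℚ, χ x = -(B x (x - ZK)) / 2)
    (μ : ℚ)
    (hμ : IsLeast {c : ℚ | ∃ l : V → ℤ, χ (toQ l) = c} μ)
    (hex : ∃ Z : V → ℤ, 0 ≤ Z ∧ Z ≠ 0 ∧ χ (toQ Z) = μ) :
    ∃ Zmax : V → ℤ, (0 ≤ Zmax ∧ Zmax ≠ 0 ∧ χ (toQ Zmax) = μ) ∧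
      ∀ Z : V → ℤ, (0 ≤ Z ∧ Z ≠ 0 ∧ χ (toQ Z) = μ) → Z ≤ Zmax :=
  chi_minimizers_greatest_element_general B hsymm hoff hneg ZK χ hχ μ hμ hex
end

section
/- For every Z ∈ ℤ^V with Z ≥ 0, the minimum of χ(l) over {l ∈ ℤ^V : l ≤ Z} equals the minimum of χ(l) over {l ∈ ℤ^V : 0 ≤ l ≤ Z} (both minima exist). -/
open Finset

theorem Pi.single_eq_smul_single_one {ι R : Type*} [DecidableEq ι] [Semiring R] (i : ι) (r : R) :
    (Pi.single i r : ι → R) = r • Pi.single i 1 := by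
  rw [← Pi.single_smul', smul_eq_mul, mul_one]

theorem exists_isLeast_image_Iic_and_Icc {α β : Type*} [Lattice α] [LocallyFiniteOrder α]
    [LinearOrder β] {f : α → β} {a Z : α} (hf : ∀ l, f (l ⊔ a) ≤ f l) (ha : a ≤ Z) :
    ∃ μ, IsLeast (f '' Set.Iic Z) μ ∧ IsLeast (f '' Set.Icc a Z) μ := by
  obtain ⟨l₀, hl₀, hmin⟩ :=
    Set.exists_min_image (Set.Icc a Z) f (Set.finite_Icc a Z) ⟨a, le_rfl, ha⟩
  refine ⟨f l₀, ⟨⟨l₀, hl₀.2, rfl⟩, ?_⟩, ⟨⟨l₀, hl₀, rfl⟩, ?_⟩⟩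
  · rintro _ ⟨l, hl, rfl⟩
    exact (hmin _ ⟨le_sup_right, sup_le hl ha⟩).trans (hf l)
  · rintro _ ⟨l, hl, rfl⟩
    exact hmin l hl

section toQ

variable {V : Type*}

@[simp]
theorem toQ_zero : toQ (0 : V → ℤ) = 0 :=
  funext fun _ => Int.cast_zero

theorem toQ_sub (a b : V → ℤ) : toQ (a - b) = toQ a - toQ b := by
  funext v
  simp [toQ]

theorem toQ_single [DecidableEq V] (v : V) : toQ (Pi.single v 1) = Pi.single v (1 : ℚ) := by
  funext w
  by_cases h : w = v <;> simp [toQ, h]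

theorem toQ_nonneg {m : V → ℤ} (hm : 0 ≤ m) : 0 ≤ toQ m :=
  fun v => by simpa [toQ] using hm v

theorem toQ_ne_zero {m : V → ℤ} (hm : m ≠ 0) : toQ m ≠ 0 := by
  contrapose! hm
  funext v
  simpa [toQ] using congrFun hm v

end toQ

namespace LinearMap.BilinForm

variable {V : Type*} [Fintype V] [DecidableEq V] (B : LinearMap.BilinForm ℚ (V → ℚ))

theorem apply_eq_sum_single_right (x y : V → ℚ) :
    B x y = ∑ v, y v * B x (Pi.single v 1) := by
  conv_lhs => rw [← univ_sum_single y]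
  simp only [map_sum, Pi.single_eq_smul_single_one _ (y _), map_smul, smul_eq_mul]

theorem apply_eq_sum_single_left (x y : V → ℚ) :
    B x y = ∑ v, x v * B (Pi.single v 1) y := by
  conv_lhs => rw [← univ_sum_single x]
  simp only [map_sum, LinearMap.sum_apply, Pi.single_eq_smul_single_one _ (x _), map_smul,
    LinearMap.smul_apply, smul_eq_mul]

theorem apply_nonneg_of_disjoint
    (hoff : ∀ v w : V, v ≠ w → 0 ≤ B (Pi.single v 1) (Pi.single w 1))
    {x y : V → ℚ} (hx : 0 ≤ x) (hy : 0 ≤ y) (hxy : ∀ v, x v = 0 ∨ y v = 0) : 0 ≤ B x y := by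
  rw [apply_eq_sum_single_left]
  refine sum_nonneg fun v _ => ?_
  rw [apply_eq_sum_single_right, mul_sum]
  refine sum_nonneg fun w _ => ?_
  by_cases hvw : v = w
  · subst hvw
    rcases hxy v with h | h <;> simp [h]
  · exact mul_nonneg (hx v) (mul_nonneg (hy w) (hoff v w hvw))

theorem exists_pos_apply_single_neg {x : V → ℚ} (hx : 0 ≤ x) (hxx : B x x < 0) :
    ∃ v, 0 < x v ∧ B x (Pi.single v 1) < 0 := by
  by_contra! h
  have : 0 ≤ B x x := by
    rw [apply_eq_sum_single_right]
    refine sum_nonneg fun v _ => ?_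
    rcases (hx v).eq_or_lt with h0 | hpos
    · simp [← h0]
    · exact mul_nonneg hpos.le (h v hpos)
  linarith

theorem exists_int_apply_toQ_single
    (hint : ∀ v w : V, ∃ n : ℤ, B (Pi.single v 1) (Pi.single w 1) = (n : ℚ))
    (m : V → ℤ) (v : V) : ∃ n : ℤ, B (toQ m) (Pi.single v 1) = n := by
  choose N hN using hint
  refine ⟨∑ w, m w * N w v, ?_⟩
  rw [apply_eq_sum_single_left]
  push_cast
  simp only [toQ, hN]

end LinearMap.BilinForm

section eulerChar

variable {M : Type*} [AddCommGroup M] [Module ℚ M] (B : LinearMap.BilinForm ℚ M) (K : M)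

def eulerChar (x : M) : ℚ := -(B x (x - K)) / 2

@[simp]
theorem eulerChar_zero : eulerChar B K 0 = 0 := by
  simp [eulerChar]

variable {B}

theorem eulerChar_add (hB : B.IsSymm) (x y : M) :
    eulerChar B K (x + y) = eulerChar B K x + eulerChar B K y - B x y := by
  have := hB.eq y x
  simp only [eulerChar, map_add, map_sub, LinearMap.add_apply]
  linarith

theorem eulerChar_neg_eq_of_adjunction (hB : B.IsSymm) {e : M} (hK : B K e = B e e + 2) (x : M) :
    eulerChar B K (-x) = eulerChar B K (-(x - e)) - 1 - B x e := by
  have := hB.eq e K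
  have := hB.eq e x
  simp only [eulerChar, map_neg, map_sub, LinearMap.neg_apply, LinearMap.sub_apply]
  linarith

end eulerChar

section NegativeDefinite

variable {V : Type*} [Fintype V] [DecidableEq V] {B : LinearMap.BilinForm ℚ (V → ℚ)} {K : V → ℚ}
  (hB : B.IsSymm)
  (hint : ∀ v w : V, ∃ n : ℤ, B (Pi.single v 1) (Pi.single w 1) = (n : ℚ))
  (hneg : ∀ x : V → ℚ, x ≠ 0 → B x x < 0)
  (hK : ∀ v : V, B K (Pi.single v 1) = B (Pi.single v 1) (Pi.single v 1) + 2)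
include hB hint hneg hK

theorem eulerChar_neg_toQ_nonneg {m : V → ℤ} (hm : 0 ≤ m) : 0 ≤ eulerChar B K (-toQ m) := by
  rcases eq_or_ne m 0 with rfl | hm0
  · simp
  obtain ⟨v, hv, hBv⟩ := B.exists_pos_apply_single_neg (toQ_nonneg hm) (hneg _ (toQ_ne_zero hm0))
  obtain ⟨n, hn⟩ := B.exists_int_apply_toQ_single hint m v
  have hn1 : (n : ℚ) ≤ -1 := by
    have : n < 0 := by exact_mod_cast hn ▸ hBv
    exact_mod_cast Int.le_sub_one_of_lt this
  have hmv : 0 < m v := by simpa [toQ] using hv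
  have hm' : 0 ≤ m - Pi.single v 1 := by
    intro w
    by_cases hw : w = v
    · subst hw
      simp only [Pi.sub_apply, Pi.single_eq_same, Pi.zero_apply]
      omega
    · simpa [hw] using hm w
  have ih := eulerChar_neg_toQ_nonneg hm'
  rw [toQ_sub, toQ_single] at ih
  rw [eulerChar_neg_eq_of_adjunction K hB (hK v)]
  linarith
termination_by (∑ v, m v).toNat
decreasing_by
  have := single_le_sum (fun w _ => hm w) (mem_univ v)
  simp only [Pi.sub_apply, sum_sub_distrib, sum_pi_single', mem_univ, if_true]
  omega

theorem eulerChar_toQ_posPart_le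
    (hoff : ∀ v w : V, v ≠ w → 0 ≤ B (Pi.single v 1) (Pi.single w 1)) (l : V → ℤ) :
    eulerChar B K (toQ l⁺) ≤ eulerChar B K (toQ l) := by
  have hsplit : toQ l = toQ l⁺ + -toQ l⁻ := by
    rw [← sub_eq_add_neg, ← toQ_sub, posPart_sub_negPart]
  have hcross : 0 ≤ B (toQ l⁺) (toQ l⁻) := by
    refine B.apply_nonneg_of_disjoint hoff (toQ_nonneg (posPart_nonneg l))
      (toQ_nonneg (negPart_nonneg l)) fun v => ?_
    rcases le_total (l v) 0 with h | h
    · left; simp [toQ, posPart_eq_zero.2 h]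
    · right; simp [toQ, negPart_eq_zero.2 h]
  have hneg_part := eulerChar_neg_toQ_nonneg hB hint hneg hK (negPart_nonneg l)
  rw [hsplit, eulerChar_add K hB, map_neg]
  linarith

end NegativeDefinite

theorem chi_min_below_Z_eq_min_effective_general
    {V : Type*} [Fintype V] [DecidableEq V]
    (B : LinearMap.BilinForm ℚ (V → ℚ))
    (hsymm : ∀ x y : V → ℚ, B x y = B y x)
    (hint : ∀ v w : V, ∃ n : ℤ, B (Pi.single v 1) (Pi.single w 1) = (n : ℚ))
    (hoff : ∀ v w : V, v ≠ w → 0 ≤ B (Pi.single v 1) (Pi.single w 1))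
    (hneg : ∀ x : V → ℚ, x ≠ 0 → B x x < 0)
    (ZK : V → ℚ)
    (hZK : ∀ v : V, B ZK (Pi.single v 1) = B (Pi.single v 1) (Pi.single v 1) + 2)
    (χ : (V → ℚ) → ℚ)
    (hχ : ∀ x : V → ℚ, χ x = -(B x (x - ZK)) / 2)
    (Z : V → ℤ) (hZ : 0 ≤ Z) :
    ∃ μ : ℚ,
      IsLeast ((fun l : V → ℤ => χ (toQ l)) '' {l | l ≤ Z}) μ ∧
      IsLeast ((fun l : V → ℤ => χ (toQ l)) '' {l | 0 ≤ l ∧ l ≤ Z}) μ := by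
  obtain rfl : χ = eulerChar B ZK := funext hχ
  exact exists_isLeast_image_Iic_and_Icc
    (eulerChar_toQ_posPart_le ⟨hsymm⟩ hint hneg hZK hoff) hZ

/-- For every `Z ∈ ℤ^V` with `Z ≥ 0`, the minimum of `χ(l)` over
`{l ∈ ℤ^V : l ≤ Z}` equals the minimum over `{l ∈ ℤ^V : 0 ≤ l ≤ Z}`
(both minima exist). -/
theorem chi_min_below_Z_eq_min_effective
    {V : Type*} [Fintype V] [Nonempty V] [DecidableEq V]
    (B : LinearMap.BilinForm ℚ (V → ℚ))
    (hsymm : ∀ x y : V → ℚ, B x y = B y x)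
    (hint : ∀ v w : V, ∃ n : ℤ, B (Pi.single v 1) (Pi.single w 1) = (n : ℚ))
    (hoff : ∀ v w : V, v ≠ w → 0 ≤ B (Pi.single v 1) (Pi.single w 1))
    (hneg : ∀ x : V → ℚ, x ≠ 0 → B x x < 0)
    (ZK : V → ℚ)
    (hZK : ∀ v : V, B ZK (Pi.single v 1) = B (Pi.single v 1) (Pi.single v 1) + 2)
    (χ : (V → ℚ) → ℚ)
    (hχ : ∀ x : V → ℚ, χ x = -(B x (x - ZK)) / 2)
    (Z : V → ℤ) (hZ : 0 ≤ Z) :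
    ∃ μ : ℚ,
      IsLeast ((fun l : V → ℤ => χ (toQ l)) '' {l | l ≤ Z}) μ ∧
      IsLeast ((fun l : V → ℤ => χ (toQ l)) '' {l | 0 ≤ l ∧ l ≤ Z}) μ :=
  chi_min_below_Z_eq_min_effective_general B hsymm hint hoff hneg ZK hZK χ hχ Z hZ
end
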